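/- (S-linearity of the differential, Lemma 3.4.) For every i ≥ 1 and every m ∈ R, P(t_i x_i · m) = t_i x_i · P(m). Consequently, for every s in the subalgebra S = span{t_I x_I : I finite} and every m ∈ R, P(s·m) = s·P(m). -/
import Mathlib


/-!
The exterior model `R = Λ_{F₂}(t₁, t₂, …) ⊗ Λ_{F₂}(x₁, x₂, …)`, realized as the free
`F₂`-vector space on basis monomials `t_I x_J` indexed by pairs of finite subsets
`I, J ⊆ {1, 2, …}` (modelled by `Finset ℕ+`), with the product
`t_I x_J · t_{I'} x_{J'} = t_{I∪I'} x_{J∪J'}` when `I ∩ I' = ∅ = J ∩ J'`, and `0` otherwise;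
the operators `Q₁(t_I x_J) = Σ_{j∈J} t_j t_I x_{J∖j}` and
`P(t_I x_J) = Σ_{K⊆J, |K|=2} t_K t_I x_{J∖K}`; and the exchange map `(t_I x_J)ᵉ = t_J x_I`.
-/

noncomputable section

namespace Tmf

abbrev F : Type := ZMod 2

/-- The underlying `F₂`-vector space of `R`, free on pairs of finite subsets of `ℕ+`. -/
abbrev R : Type := (Finset ℕ+ × Finset ℕ+) →₀ F

/-- The basis monomial `t_I x_J`. -/
def tx (I J : Finset ℕ+) : R := Finsupp.single (I, J) 1

/-- Product of two basis monomials. -/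
def mulVal (a b : Finset ℕ+ × Finset ℕ+) : R :=
  if Disjoint a.1 b.1 ∧ Disjoint a.2 b.2 then tx (a.1 ∪ b.1) (a.2 ∪ b.2) else 0

/-- The (bilinear) multiplication of `R`. -/
def mulR : R →ₗ[F] R →ₗ[F] R :=
  Finsupp.lsum F fun a => LinearMap.id.smulRight
    (Finsupp.lsum F fun b => LinearMap.id.smulRight (mulVal a b))

/-- `Q₁` on a basis monomial: `Q₁(t_I x_J) = Σ_{j∈J} t_j t_I x_{J∖j}`. -/
def Q1val (a : Finset ℕ+ × Finset ℕ+) : R :=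
  ∑ j ∈ a.2, if j ∈ a.1 then 0 else tx (insert j a.1) (a.2.erase j)

/-- The operator `Q₁ : R → R`. -/
def Q1R : R →ₗ[F] R := Finsupp.lsum F fun a => LinearMap.id.smulRight (Q1val a)

/-- `P` on a basis monomial: `P(t_I x_J) = Σ_{K⊆J, |K|=2} t_K t_I x_{J∖K}`. -/
def PvalR (a : Finset ℕ+ × Finset ℕ+) : R :=
  ∑ p ∈ (a.2 ×ˢ a.2).filter fun p => p.1 < p.2,
    if p.1 ∈ a.1 ∨ p.2 ∈ a.1 then 0
    else tx (insert p.1 (insert p.2 a.1)) ((a.2.erase p.1).erase p.2)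

/-- The operator `P : R → R` (the `d₂`-differential of the length spectral sequence). -/
def PR : R →ₗ[F] R := Finsupp.lsum F fun a => LinearMap.id.smulRight (PvalR a)

/-- The exchange map `(t_I x_J)ᵉ = t_J x_I`. -/
def exch : R →ₗ[F] R := Finsupp.lsum F fun a => LinearMap.id.smulRight (tx a.2 a.1)

/-- `x_n` (with `n : ℕ` positive, coerced into `ℕ+`). -/
def xg (n : ℕ) : R := tx ∅ {n.toPNat'}

/-- `t_n` (with `n : ℕ` positive, coerced into `ℕ+`). -/
def tg (n : ℕ) : R := tx {n.toPNat'} ∅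

/-- `M_J ⊆ R`: the span of `{t_I x_{J∖I} : I ⊆ J}`. -/
def MJ (J : Finset ℕ+) : Submodule F R :=
  Submodule.span F {m | ∃ I ⊆ J, m = tx I (J \ I)}

/-- The sets `B_{[2t]}` of the recursive construction (Definition 4.2). -/
def B2 : ℕ → Set R
  | 0 => {tx ∅ ∅}
  | t + 1 =>
      (fun b => mulR (Q1R (mulR b (xg (2 * t + 1)))) (xg (2 * t + 2))) '' B2 t ∪
      (fun b => mulR (exch (Q1R (mulR b (xg (2 * t + 1))))) (tg (2 * t + 2))) '' B2 t

/-- The sets `B_{[n]}` (Definition 4.2): `B_{[0]} = {1}`,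
`B_{[2t+1]} = Q₁(B_{[2t]}·x_{2t+1}) ∪ (Q₁(B_{[2t]}·x_{2t+1}))ᵉ`,
`B_{[2t+2]} = Q₁(B_{[2t]}·x_{2t+1})·x_{2t+2} ∪ (Q₁(B_{[2t]}·x_{2t+1}))ᵉ·t_{2t+2}`. -/
def BB (n : ℕ) : Set R :=
  if Even n then B2 (n / 2)
  else
    (fun b => Q1R (mulR b (xg n))) '' B2 (n / 2) ∪
    (fun b => exch (Q1R (mulR b (xg n)))) '' B2 (n / 2)

/-- `[n] = {1, …, n}` as a `Finset ℕ+`. -/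
def rng (n : ℕ) : Finset ℕ+ := (Finset.range n).image fun i => (i + 1).toPNat'

/-- `B_J` for a finite `J ⊆ ℕ+`: the image of `B_{[|J|]}` under the relabeling
`t_i ↦ t_{φ(i)}`, `x_i ↦ x_{φ(i)}`, where `φ : [|J|] → J` is the order-preserving
bijection (`phiJ J`, extended by the identity to all of `ℕ+`). -/
def phiJ (J : Finset ℕ+) (m : ℕ+) : ℕ+ :=
  if h : (m : ℕ) - 1 < J.card then (J.orderIsoOfFin rfl ⟨(m : ℕ) - 1, h⟩ : ℕ+) else m

/-- `B_J`: the relabeled copy of `B_{[|J|]}` inside `M_J`. -/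
def BJ (J : Finset ℕ+) : Set R :=
  (Finsupp.lsum F fun a => LinearMap.id.smulRight
      (tx (a.1.image (phiJ J)) (a.2.image (phiJ J))) : R →ₗ[F] R) '' BB J.card


/-- The subalgebra `S ⊆ R`: the span of the elements `t_I x_I`. -/
def S : Submodule F R := Submodule.span F {m | ∃ I : Finset ℕ+, m = tx I I}

lemma mulR_tx (a b : Finset ℕ+ × Finset ℕ+) :
    mulR (tx a.1 a.2) (tx b.1 b.2) = mulVal a b := by
  simp [mulR, tx, Finsupp.lsum_single]

lemma PR_tx (A B : Finset ℕ+) : PR (tx A B) = PvalR (A, B) := by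
  simp [PR, tx, Finsupp.lsum_single]

lemma key (I A B : Finset ℕ+) :
    PR (mulR (tx I I) (tx A B)) = mulR (tx I I) (PR (tx A B)) := by
  rw [show mulR (tx I I) (tx A B) = mulVal (I, I) (A, B) from mulR_tx (I, I) (A, B), PR_tx]
  by_cases h : Disjoint I A ∧ Disjoint I B
  · obtain ⟨hIA, hIB⟩ := h
    rw [mulVal, if_pos ⟨hIA, hIB⟩]
    unfold PvalR
    rw [PR_tx]
    unfold PvalR
    simp only [map_sum]
    have hsub : ((B ×ˢ B).filter fun p => p.1 < p.2) ⊆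
        (((I ∪ B) ×ˢ (I ∪ B)).filter fun p => p.1 < p.2) :=
      Finset.filter_subset_filter _
        (Finset.product_subset_product Finset.subset_union_right Finset.subset_union_right)
    rw [← Finset.sum_subset hsub ?hzero]
    · apply Finset.sum_congr rfl
      intro p hp
      simp only [Finset.mem_filter, Finset.mem_product] at hp
      obtain ⟨⟨hp1B, hp2B⟩, _⟩ := hp
      have hp1I : p.1 ∉ I := Finset.disjoint_right.mp hIB hp1B
      have hp2I : p.2 ∉ I := Finset.disjoint_right.mp hIB hp2B
      by_cases hc : p.1 ∈ A ∨ p.2 ∈ A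
      · rw [if_pos, if_pos hc, map_zero]
        simp only [Finset.mem_union]
        tauto
      · rw [if_neg, if_neg hc]
        · rw [show (mulR (tx I I)) (tx (insert p.1 (insert p.2 A)) ((B.erase p.1).erase p.2))
              = mulVal (I, I) (insert p.1 (insert p.2 A), (B.erase p.1).erase p.2) from
              mulR_tx (I, I) (insert p.1 (insert p.2 A), (B.erase p.1).erase p.2), mulVal, if_pos]
          · have e1 : I ∪ insert p.1 (insert p.2 A) = insert p.1 (insert p.2 (I ∪ A)) := by
              rw [Finset.union_insert, Finset.union_insert]
            have e2 : I ∪ (B.erase p.1).erase p.2 = ((I ∪ B).erase p.1).erase p.2 := by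
              ext a
              simp only [Finset.mem_union, Finset.mem_erase]
              constructor
              · rintro (haI | ⟨h2, h1, haB⟩)
                · exact ⟨fun he => hp2I (he ▸ haI), fun he => hp1I (he ▸ haI), Or.inl haI⟩
                · exact ⟨h2, h1, Or.inr haB⟩
              · rintro ⟨h2, h1, haI | haB⟩
                · exact Or.inl haI
                · exact Or.inr ⟨h2, h1, haB⟩
            simp only [e1, e2]
          · constructor
            · rw [Finset.disjoint_insert_right, Finset.disjoint_insert_right]
              exact ⟨hp1I, hp2I, hIA⟩
            · exact Finset.disjoint_of_subset_right
                (((B.erase p.1).erase_subset p.2).trans (B.erase_subset p.1)) hIB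
        · simp only [Finset.mem_union]
          tauto
    · intro p hp hps
      simp only [Finset.mem_filter, Finset.mem_product] at hp hps
      obtain ⟨⟨hp1, hp2⟩, hlt⟩ := hp
      have : p.1 ∉ B ∨ p.2 ∉ B := by tauto
      have hIc : p.1 ∈ I ∨ p.2 ∈ I := by
        rcases this with h1 | h2
        · rcases Finset.mem_union.mp hp1 with h | h
          · exact Or.inl h
          · exact absurd h (by tauto)
        · rcases Finset.mem_union.mp hp2 with h | h
          · exact Or.inr h
          · exact absurd h (by tauto)
      rw [if_pos]
      simp only [Finset.mem_union]
      tauto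
  · rw [mulVal, if_neg h, map_zero]
    unfold PvalR
    rw [map_sum]
    symm
    apply Finset.sum_eq_zero
    intro p hp
    simp only [Finset.mem_filter, Finset.mem_product] at hp
    obtain ⟨⟨hp1B, hp2B⟩, _⟩ := hp
    by_cases hc : p.1 ∈ A ∨ p.2 ∈ A
    · rw [if_pos hc, map_zero]
    · rw [if_neg hc,
        show (mulR (tx I I)) (tx (insert p.1 (insert p.2 A)) ((B.erase p.1).erase p.2))
          = mulVal (I, I) (insert p.1 (insert p.2 A), (B.erase p.1).erase p.2) from
          mulR_tx (I, I) (insert p.1 (insert p.2 A), (B.erase p.1).erase p.2), mulVal, if_neg]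
      rintro ⟨hd1, hd2⟩
      apply h
      constructor
      · exact Finset.disjoint_of_subset_right
          (fun a ha => Finset.mem_insert_of_mem (Finset.mem_insert_of_mem ha)) hd1
      · rw [Finset.disjoint_right]
        intro a haB haI
        by_cases ha1 : a = p.1
        · exact Finset.disjoint_left.mp hd1 haI (ha1 ▸ Finset.mem_insert_self _ _)
        · by_cases ha2 : a = p.2
          · exact Finset.disjoint_left.mp hd1 haI
              (ha2 ▸ Finset.mem_insert_of_mem (Finset.mem_insert_self _ _))
          · exact Finset.disjoint_left.mp hd2 haI
              (Finset.mem_erase.mpr ⟨ha2, Finset.mem_erase.mpr ⟨ha1, haB⟩⟩)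

lemma keyM (I : Finset ℕ+) (m : R) :
    PR (mulR (tx I I) m) = mulR (tx I I) (PR m) := by
  have : PR ∘ₗ mulR (tx I I) = mulR (tx I I) ∘ₗ PR := by
    apply Finsupp.lhom_ext
    intro a b
    have hb : (Finsupp.single a b : R) = b • tx a.1 a.2 := by
      simp [tx, Finsupp.smul_single]
    simp only [LinearMap.comp_apply, hb, map_smul]
    rw [key I a.1 a.2]
  exact congrFun (congrArg DFunLike.coe this) m

/-- `S`-linearity of the differential.
For every `i ≥ 1` and `m ∈ R`, `P(tᵢxᵢ · m) = tᵢxᵢ · P(m)`; consequently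
`P(s·m) = s·P(m)` for every `s ∈ S` and `m ∈ R`. -/
theorem P_S_linear :
    (∀ (i : ℕ+) (m : R), PR (mulR (tx {i} {i}) m) = mulR (tx {i} {i}) (PR m)) ∧
    (∀ s ∈ S, ∀ m : R, PR (mulR s m) = mulR s (PR m)) := by
  constructor
  · intro i m
    exact keyM {i} m
  · intro s hs m
    induction hs using Submodule.span_induction with
    | mem x hx =>
      obtain ⟨I, rfl⟩ := hx
      exact keyM I m
    | zero => simp
    | add x y _ _ hx hy => simp [map_add, LinearMap.add_apply, hx, hy]
    | smul c x _ hx => simp [map_smul, LinearMap.smul_apply, hx]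

end Tmf

end
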